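/- arXiv:2507.07608 — 2 statements merged into one kernel-verified Lean document; each statement's English description precedes it below -/
import Mathlib

section
/- Let Λ be a τ-tilting finite algebra of rank n and let φ_i (1 ≤ i ≤ n-1) denote the mutation operations on the set of complete τ-exceptional sequences. Then the commutation relations hold: φ_i φ_j (A) = φ_j φ_i (A) for all complete τ-exceptional sequences A whenever |i - j| ≥ 2. -/
set_option maxSynthPendingDepth 3

open Function
open Function

section Core
variable (Λ : Type) [Ring Λ]

/-- The submodule lattice of `M` is a chain (`M` is uniserial). -/
def IsUniserialModule (M : Type) [AddCommGroup M] [Module Λ M] : Prop :=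
  ∀ N N' : Submodule Λ M, N ≤ N' ∨ N' ≤ N

/-- `M` is an indecomposable module. -/
def IsIndecModule (M : Type) [AddCommGroup M] [Module Λ M] : Prop :=
  Nontrivial M ∧ ∀ N N' : Submodule Λ M, IsCompl N N' → N = ⊥ ∨ N' = ⊥

/-- `Λ` is a Nakayama algebra: every finite indecomposable module is uniserial. -/
def IsNakayama : Prop :=
  ∀ (M : Type) [AddCommGroup M] [Module Λ M], Module.Finite Λ M →
    IsIndecModule Λ M → IsUniserialModule Λ M

/-- `N` is generated by `M`: an epimorphic image of a finite direct sum of copies of `M`. -/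
def InGen (M N : Type) [AddCommGroup M] [Module Λ M] [AddCommGroup N] [Module Λ N] : Prop :=
  ∃ (m : ℕ) (f : (Fin m → M) →ₗ[Λ] N), Surjective f

/-- `N` is cogenerated by `M`: embeds into a finite direct sum of copies of `M`. -/
def InCogen (M N : Type) [AddCommGroup M] [Module Λ M] [AddCommGroup N] [Module Λ N] : Prop :=
  ∃ (m : ℕ) (f : N →ₗ[Λ] (Fin m → M)), Injective f

/-- `Ext¹_Λ(N, M') = 0`: every short exact sequence `0 → M' → E → N → 0` splits. -/
def Ext1Zero (N M' : Type) [AddCommGroup N] [Module Λ N] [AddCommGroup M'] [Module Λ M'] : Prop :=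
  ∀ (E : Type) [AddCommGroup E] [Module Λ E] (f : M' →ₗ[Λ] E) (g : E →ₗ[Λ] N),
    Injective f → Surjective g → LinearMap.range f = LinearMap.ker g →
      ∃ s : N →ₗ[Λ] E, g.comp s = LinearMap.id

/-- `Hom_Λ(M, N) = 0`. -/
def Hom0 (M N : Type) [AddCommGroup M] [Module Λ M] [AddCommGroup N] [Module Λ N] : Prop :=
  ∀ f : M →ₗ[Λ] N, f = 0

/-- `Hom_Λ(M, τN) = 0`, encoded via the Auslander–Smalø criterion:
`Ext¹(N, Gen M) = 0`. -/
def HomTauVanish (M N : Type) [AddCommGroup M] [Module Λ M] [AddCommGroup N] [Module Λ N] : Prop :=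
  ∀ (M' : Type) [AddCommGroup M'] [Module Λ M'], InGen Λ M M' → Ext1Zero Λ N M'

/-- `M` is τ-rigid: `Hom(M, τM) = 0`. -/
def IsTauRigid (M : Type) [AddCommGroup M] [Module Λ M] : Prop :=
  HomTauVanish Λ M M

/-- `Y` lies in the τ-perpendicular category `J(X) = X^⊥ ∩ ⊥(τX)`. -/
def InJ (X Y : Type) [AddCommGroup X] [Module Λ X] [AddCommGroup Y] [Module Λ Y] : Prop :=
  Hom0 Λ X Y ∧ HomTauVanish Λ Y X

/-- `X` is (isomorphic to) a direct summand of `N`. -/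
def SummandOf (X N : Type) [AddCommGroup X] [Module Λ X] [AddCommGroup N] [Module Λ N] : Prop :=
  ∃ (C : Type) (_ : AddCommGroup C), ∃ (_ : Module Λ C), Nonempty (N ≃ₗ[Λ] X × C)

/-- `X ∈ add M`. -/
def InAdd (X M : Type) [AddCommGroup X] [Module Λ X] [AddCommGroup M] [Module Λ M] : Prop :=
  ∃ m : ℕ, SummandOf Λ X (Fin m → M)

/-- The length of a module, as the Krull dimension of its submodule lattice. -/
noncomputable def modLength (M : Type) [AddCommGroup M] [Module Λ M] : WithBot ℕ∞ :=
  Order.krullDim (Submodule Λ M)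

end Core

section MCat
open CategoryTheory
variable (Λ : Type) [Ring Λ]

/-- Bundled `Λ`-modules. -/
abbrev Mods : Type 1 := ModuleCat.{0} Λ

/-- The ambient subcategory `mod Λ` of all finite modules. -/
def finCat : Mods Λ → Prop := fun M => Module.Finite Λ M.carrier

def mIndec (M : Mods Λ) : Prop := IsIndecModule Λ M.carrier
def mInGen (M N : Mods Λ) : Prop := InGen Λ M.carrier N.carrier
def mHom0 (M N : Mods Λ) : Prop := Hom0 Λ M.carrier N.carrier
def mExt1Zero (N M' : Mods Λ) : Prop := Ext1Zero Λ N.carrier M'.carrier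

/-- `Hom(M, τ_𝒞 N) = 0` for a τ-perpendicular subcategory `𝒞`, encoded via the
relative Auslander–Smalø criterion `Ext¹(N, Gen M ∩ 𝒞) = 0`. -/
def RelHomTauVanish (𝒞 : Mods Λ → Prop) (M N : Mods Λ) : Prop :=
  ∀ M' : Mods Λ, 𝒞 M' → mInGen Λ M M' → mExt1Zero Λ N M'

/-- The relative τ-perpendicular subcategory `J_𝒞(X) = 𝒞 ∩ X^⊥ ∩ ⊥(τ_𝒞 X)`. -/
def RelJ (𝒞 : Mods Λ → Prop) (X : Mods Λ) : Mods Λ → Prop :=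
  fun Y => 𝒞 Y ∧ mHom0 Λ X Y ∧ RelHomTauVanish Λ 𝒞 Y X

/-- τ-exceptional sequences, by recursion on the *reversed* sequence: the head `X`
is the last module of the sequence; it is relatively τ-rigid indecomposable in `𝒞`,
and the rest is a τ-exceptional sequence in `J_𝒞(X)`. -/
def IsTauExcRev (𝒞 : Mods Λ → Prop) : List (Mods Λ) → Prop
  | [] => True
  | X :: rest => (𝒞 X ∧ mIndec Λ X ∧ RelHomTauVanish Λ 𝒞 X X) ∧ IsTauExcRev (RelJ Λ 𝒞 X) rest

/-- `(A_1, …, A_t)` is a τ-exceptional sequence in `𝒞`. -/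
def IsTauExcSeq (𝒞 : Mods Λ → Prop) (l : List (Mods Λ)) : Prop := IsTauExcRev Λ 𝒞 l.reverse

/-- `Λ` has rank `n`: there are `n` pairwise non-isomorphic simple modules
exhausting all simples. -/
def HasRank (n : ℕ) : Prop :=
  ∃ S : Fin n → Mods Λ, (∀ i, IsSimpleModule Λ (S i).carrier) ∧
    (∀ i j, i ≠ j → IsEmpty (S i ≅ S j)) ∧
    ∀ T : Mods Λ, IsSimpleModule Λ T.carrier → ∃ i, Nonempty (T ≅ S i)

end MCat

/-- The iterated τ-perpendicular category `J(A_m, A_{m+1}, …, A_{n-1})` of the tail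
of a sequence `A`, with ambient category `mod Λ` (all finite modules). -/
def ambJ (Λ : Type) [Ring Λ] (A : ℕ → Mods Λ) (n : ℕ) (m : ℕ) : Mods Λ → Prop :=
  if h : m < n then RelJ Λ (ambJ Λ A n (m + 1)) (A m) else finCat Λ
termination_by n - m
decreasing_by omega

/-- Mutation of a complete τ-exceptional sequence `(A_0, …, A_{n-1})` at position
`i`: the pair `(A_i, A_{i+1})` is replaced by its pair-mutation `μ`, computed in
the ambient category `J(A_{i+2}, …, A_{n-1})`; all other entries are unchanged. -/
def mutateAt (Λ : Type) [Ring Λ]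
    (μ : (Mods Λ → Prop) → Mods Λ → Mods Λ → Mods Λ × Mods Λ)
    (n : ℕ) (A : ℕ → Mods Λ) (i : ℕ) : ℕ → Mods Λ := fun t =>
  if t = i then (μ (ambJ Λ A n (i + 2)) (A i) (A (i + 1))).1
  else if t = i + 1 then (μ (ambJ Λ A n (i + 2)) (A i) (A (i + 1))).2
  else A t

section AuxLems

variable (Λ : Type) [Ring Λ]

lemma ambJ_eq_of (A : ℕ → Mods Λ) {n m : ℕ} (h : m < n) :
    ambJ Λ A n m = RelJ Λ (ambJ Λ A n (m + 1)) (A m) := by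
  rw [ambJ, dif_pos h]

lemma ambJ_stop (A : ℕ → Mods Λ) {n m : ℕ} (h : ¬ m < n) :
    ambJ Λ A n m = finCat Λ := by
  rw [ambJ, dif_neg h]

lemma ambJ_congr (A B : ℕ → Mods Λ) (n m : ℕ)
    (h : ∀ t, m ≤ t → A t = B t) : ambJ Λ A n m = ambJ Λ B n m := by
  by_cases hm : m < n
  · rw [ambJ_eq_of Λ A hm, ambJ_eq_of Λ B hm, h m le_rfl,
      ambJ_congr A B n (m + 1) (fun t ht => h t (by omega))]
  · rw [ambJ_stop Λ A hm, ambJ_stop Λ B hm]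
termination_by n - m
decreasing_by omega

lemma tauExc_tail (A : ℕ → Mods Λ) (n : ℕ)
    (hA : IsTauExcSeq Λ (finCat Λ) (List.ofFn (fun t : Fin n => A t)))
    (m : ℕ) (hm : m ≤ n) :
    IsTauExcRev Λ (ambJ Λ A n m) ((List.ofFn (fun t : Fin m => A t)).reverse) := by
  by_cases h : m = n
  · subst h
    rw [ambJ_stop Λ A (lt_irrefl m)]
    exact hA
  · have hmn : m < n := by omega
    have h2 := tauExc_tail A n hA (m + 1) (by omega)
    simp only [List.ofFn_succ', List.concat_eq_append, List.reverse_append,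
      List.reverse_singleton, List.singleton_append, Fin.val_last, Fin.coe_castSucc] at h2
    rw [ambJ_eq_of Λ A hmn]
    exact h2.2
termination_by n - m
decreasing_by omega

variable (μ : (Mods Λ → Prop) → Mods Λ → Mods Λ → Mods Λ × Mods Λ) (n : ℕ)

lemma mA_ne (A : ℕ → Mods Λ) (i t : ℕ) (h1 : t ≠ i) (h2 : t ≠ i + 1) :
    mutateAt Λ μ n A i t = A t := by
  simp only [mutateAt]
  rw [if_neg h1, if_neg h2]

lemma mA_fst (A : ℕ → Mods Λ) (i : ℕ) :
    mutateAt Λ μ n A i i = (μ (ambJ Λ A n (i + 2)) (A i) (A (i + 1))).1 := by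
  simp [mutateAt]

lemma mA_snd (A : ℕ → Mods Λ) (i : ℕ) :
    mutateAt Λ μ n A i (i + 1) = (μ (ambJ Λ A n (i + 2)) (A i) (A (i + 1))).2 := by
  simp only [mutateAt]
  rw [if_neg (by omega)]
  simp

lemma ambJ_mutate (A : ℕ → Mods Λ) (j : ℕ) (hjn : j + 1 < n)
    (hJ : RelJ Λ (RelJ Λ (ambJ Λ A n (j + 2)) (μ (ambJ Λ A n (j + 2)) (A j) (A (j + 1))).2)
        (μ (ambJ Λ A n (j + 2)) (A j) (A (j + 1))).1
      = RelJ Λ (RelJ Λ (ambJ Λ A n (j + 2)) (A (j + 1))) (A j))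
    (m : ℕ) (hm : m ≤ j) :
    ambJ Λ (mutateAt Λ μ n A j) n m = ambJ Λ A n m := by
  by_cases h : m = j
  · subst h
    have h2 : ambJ Λ (mutateAt Λ μ n A m) n (m + 2) = ambJ Λ A n (m + 2) :=
      ambJ_congr Λ _ A n (m + 2) (fun t ht => mA_ne Λ μ n A m t (by omega) (by omega))
    rw [ambJ_eq_of Λ _ (by omega : m < n), ambJ_eq_of Λ _ (by omega : m + 1 < n),
        ambJ_eq_of Λ A (by omega : m < n), ambJ_eq_of Λ A (by omega : m + 1 < n), h2,
        mA_fst Λ μ n A m, mA_snd Λ μ n A m]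
    exact hJ
  · rw [ambJ_eq_of Λ _ (by omega : m < n), ambJ_eq_of Λ A (by omega : m < n),
        ambJ_mutate A j hjn hJ (m + 1) (by omega),
        mA_ne Λ μ n A j m (by omega) (by omega)]
termination_by j - m
decreasing_by omega

end AuxLems

/-- Let `Λ` be τ-tilting finite of rank `n` and let `φ_i` denote
mutation of complete τ-exceptional sequences at position `i`, given by a pair
mutation `μ` (computed in the ambient iterated τ-perpendicular category) which
sends τ-exceptional pairs to τ-exceptional pairs and preserves the
τ-perpendicular category: `J(φ(B,C)) = J(B,C)`. Then the commutation relations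
hold: `φ_i φ_j = φ_j φ_i` whenever `|i - j| ≥ 2`. -/
theorem mutation_commutation_relations
    (k Λ : Type) [Field k] [Ring Λ] [Algebra k Λ] [FiniteDimensional k Λ]
    (n : ℕ)
    (μ : (Mods Λ → Prop) → Mods Λ → Mods Λ → Mods Λ × Mods Λ)
    (hμ : ∀ (𝒞 : Mods Λ → Prop) (B C : Mods Λ), IsTauExcRev Λ 𝒞 [C, B] →
      IsTauExcRev Λ 𝒞 [(μ 𝒞 B C).2, (μ 𝒞 B C).1] ∧
      RelJ Λ (RelJ Λ 𝒞 (μ 𝒞 B C).2) (μ 𝒞 B C).1 = RelJ Λ (RelJ Λ 𝒞 C) B)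
    (A : ℕ → Mods Λ)
    (hA : IsTauExcSeq Λ (finCat Λ) (List.ofFn (fun t : Fin n => A t)))
    (i j : ℕ) (hij : i + 2 ≤ j) (hjn : j + 1 < n) :
    mutateAt Λ μ n (mutateAt Λ μ n A j) i = mutateAt Λ μ n (mutateAt Λ μ n A i) j := by
  -- the exceptional pair (A j, A (j+1)) in the ambient category J(A_{j+2}, …)
  have hp := tauExc_tail Λ A n hA (j + 2) (by omega)
  simp only [List.ofFn_succ', List.concat_eq_append, List.reverse_append,
    List.reverse_singleton, List.singleton_append, Fin.val_last, Fin.coe_castSucc] at hp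
  have hpair : IsTauExcRev Λ (ambJ Λ A n (j + 2)) [A (j + 1), A j] :=
    ⟨hp.1, hp.2.1, trivial⟩
  have hJ := (hμ (ambJ Λ A n (j + 2)) (A j) (A (j + 1)) hpair).2
  -- the two key ambient-category identifications
  have EB : ambJ Λ (mutateAt Λ μ n A j) n (i + 2) = ambJ Λ A n (i + 2) :=
    ambJ_mutate Λ μ n A j hjn hJ (i + 2) (by omega)
  have EC : ambJ Λ (mutateAt Λ μ n A i) n (j + 2) = ambJ Λ A n (j + 2) :=
    ambJ_congr Λ _ A n (j + 2) (fun t ht => mA_ne Λ μ n A i t (by omega) (by omega))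
  funext t
  by_cases h1 : t = i
  · rw [h1, mA_fst Λ μ n, EB, mA_ne Λ μ n A j i (by omega) (by omega),
        mA_ne Λ μ n A j (i + 1) (by omega) (by omega),
        mA_ne Λ μ n (mutateAt Λ μ n A i) j i (by omega) (by omega),
        mA_fst Λ μ n A i]
  · by_cases h2 : t = i + 1
    · rw [h2, mA_snd Λ μ n, EB, mA_ne Λ μ n A j i (by omega) (by omega),
          mA_ne Λ μ n A j (i + 1) (by omega) (by omega),
          mA_ne Λ μ n (mutateAt Λ μ n A i) j (i + 1) (by omega) (by omega),
          mA_snd Λ μ n A i]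
    · by_cases h3 : t = j
      · rw [h3, mA_ne Λ μ n (mutateAt Λ μ n A j) i j (by omega) (by omega),
            mA_fst Λ μ n A j,
            mA_fst Λ μ n, EC, mA_ne Λ μ n A i j (by omega) (by omega),
            mA_ne Λ μ n A i (j + 1) (by omega) (by omega)]
      · by_cases h4 : t = j + 1
        · rw [h4, mA_ne Λ μ n (mutateAt Λ μ n A j) i (j + 1) (by omega) (by omega),
              mA_snd Λ μ n A j,
              mA_snd Λ μ n, EC, mA_ne Λ μ n A i j (by omega) (by omega),
              mA_ne Λ μ n A i (j + 1) (by omega) (by omega)]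
        · rw [mA_ne Λ μ n (mutateAt Λ μ n A j) i t h1 h2, mA_ne Λ μ n A j t h3 h4,
              mA_ne Λ μ n (mutateAt Λ μ n A i) j t h3 h4, mA_ne Λ μ n A i t h1 h2]
end

section
/- Over C_n, let 0 → M' → E → N → 0 be a non-split short exact sequence of modules with M' indecomposable, N indecomposable. Then there exists an indecomposable direct summand U of E such that M' embeds into U and U surjects onto N. -/
set_option maxSynthPendingDepth 3

open Function
open Function

section CnDefs
variable (k : Type) [Field k] (n : ℕ)

/-- Shift a vertex of the cyclic quiver `i ↦ i + t (mod n)`. -/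
def finShift {n : ℕ} (i : Fin n) (t : ℕ) : Fin n := ⟨(i + t) % n, Nat.mod_lt _ i.pos⟩

/-- Generators of the path algebra of the cyclic quiver `Δ_n`:
`Sum.inl i` is the trivial path at vertex `i`, `Sum.inr i` the arrow `a_i : i → i - 1`. -/
abbrev CnGen (n : ℕ) : Type := (Fin n) ⊕ (Fin n)

/-- The path of length `n` (full cycle) ending at vertex `i`:
`a_{i+1} ⋯ a_{i-1} a_i` (written with the leftmost factor the last arrow). -/
noncomputable def cnCycle (i : Fin n) : FreeAlgebra k (CnGen n) :=
  ((List.range n).map (fun t => FreeAlgebra.ι k (Sum.inr (finShift i (t + 1))))).prod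

/-- Relations defining `C_n = kΔ_n / r^n`: the path algebra relations of the cyclic
quiver (orthogonal idempotents summing to one, arrow incidence) together with the
vanishing of all paths of length `n`. -/
inductive CnRel : FreeAlgebra k (CnGen n) → FreeAlgebra k (CnGen n) → Prop
  | idem (i : Fin n) :
      CnRel (FreeAlgebra.ι k (Sum.inl i) * FreeAlgebra.ι k (Sum.inl i)) (FreeAlgebra.ι k (Sum.inl i))
  | orth (i j : Fin n) (h : i ≠ j) :
      CnRel (FreeAlgebra.ι k (Sum.inl i) * FreeAlgebra.ι k (Sum.inl j)) 0
  | unit : CnRel (∑ i : Fin n, FreeAlgebra.ι k (Sum.inl i)) 1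
  | arrow_tgt (i : Fin n) :
      CnRel (FreeAlgebra.ι k (Sum.inl (finShift i (n - 1))) * FreeAlgebra.ι k (Sum.inr i))
        (FreeAlgebra.ι k (Sum.inr i))
  | arrow_src (i : Fin n) :
      CnRel (FreeAlgebra.ι k (Sum.inr i) * FreeAlgebra.ι k (Sum.inl i)) (FreeAlgebra.ι k (Sum.inr i))
  | cycle (i : Fin n) : CnRel (cnCycle k n i) 0

/-- The cyclic Nakayama algebra `C_n = kΔ_n / r^n`. -/
abbrev CnAlg : Type := RingQuot (CnRel k n)

/-- The idempotent `e_i ∈ C_n` at vertex `i`. -/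
noncomputable def cnIdem (i : Fin n) : CnAlg k n :=
  RingQuot.mkAlgHom k (CnRel k n) (FreeAlgebra.ι k (Sum.inl i))

/-- The indecomposable projective `P(i) = C_n e_i`. -/
noncomputable def cnProj (i : Fin n) : Submodule (CnAlg k n) (CnAlg k n) :=
  Submodule.span (CnAlg k n) {cnIdem k n i}

end CnDefs

/-- The Jacobson radical of a ring. -/
noncomputable def radIdeal (Λ : Type) [Ring Λ] : Ideal Λ := Ideal.jacobson ⊥

/-- The `i`-th radical power `rad^i M` of a module, as a submodule. -/
noncomputable def radPow (Λ : Type) [Ring Λ] (i : ℕ) (M : Type) [AddCommGroup M]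
    [Module Λ M] : Submodule Λ M :=
  (radIdeal Λ) ^ i • (⊤ : Submodule Λ M)

/-- The top `M / rad M` of a module. -/
abbrev topOf (Λ : Type) [Ring Λ] (M : Type) [AddCommGroup M] [Module Λ M] : Type :=
  M ⧸ radPow Λ 1 M

/-- The indecomposable `C_n`-module `M^t_l = P(t)/rad^l P(t)`, with top `S(t)`
and length `l` (for `l ≤ n`). -/
noncomputable abbrev cnMod (k : Type) [Field k] (n : ℕ) (t : Fin n) (l : ℕ) : Type :=
  (↥(cnProj k n t)) ⧸ (radPow (CnAlg k n) l (↥(cnProj k n t)))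

/-!
Write `a = ∑ aᵢ` for the sum of the arrows and call `x` homogeneous if `x = e_d x`. Over `k`, the
cyclic module generated by a homogeneous `x` is spanned by the homogeneous elements `aʲ x`; hence
its socle and its top are simple: `⊥` is inf-irreducible and `⊤` is sup-irreducible in its lattice
of submodules. A homogeneous `x` of maximal Loewy length generates a direct summand (a Zorn argument
on complements), so every finitely generated `C_n`-module, `E` in particular, is a finite direct sum
of such cyclic modules, and every indecomposable one, like `M'` and `N`, is itself cyclic.

In `E = ⊕ U` the complements of the summands meet in `0`, so by inf-irreducibility the projection
to some `U` is injective on `M'`; `N` is the sum of the images of the summands, so by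
sup-irreducibility some `U'` maps onto `N`. If `U ≠ U'`, non-splitness makes neither map bijective,
so `ℓ(M') < ℓ(U)` and `ℓ(N) < ℓ(U')`, while `ℓ(U) + ℓ(U') ≤ ℓ(E) = ℓ(M') + ℓ(N)`.
-/

namespace Finset

variable {α ι : Type*} [Lattice α] [BoundedOrder α] [DecidableEq ι] {s : Finset ι} {f : ι → α}

theorem SupIndep.isCompl_sup_erase (hs : s.SupIndep f) (htop : s.sup f = ⊤) {i : ι}
    (hi : i ∈ s) : IsCompl (f i) ((s.erase i).sup f) :=
  ⟨supIndep_iff_disjoint_erase.1 hs i hi,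
    codisjoint_iff.2 <| by rw [← sup_insert, insert_erase hi, htop]⟩

theorem SupIndep.sup_inf_inf_sup_erase_eq_bot [IsModularLattice α] (hs : s.SupIndep f) :
    s.sup f ⊓ s.inf (fun i => (s.erase i).sup f) = ⊥ := by
  induction s using Finset.induction_on with
  | empty => simp
  | insert a s ha ih =>
    have hdisj : Disjoint (f a) (s.sup f) := hs (subset_insert a s) (mem_insert_self a s) ha
    have hcut : ∀ i ∈ s, s.sup f ⊓ ((insert a s).erase i).sup f = (s.erase i).sup f := by
      intro i hi
      rw [erase_insert_of_ne (ne_of_mem_of_not_mem hi ha).symm, sup_insert, sup_comm, inf_comm,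
        sup_inf_assoc_of_le _ (sup_mono (erase_subset i s)), hdisj.eq_bot, sup_bot_eq]
    rw [eq_bot_iff, ← ih (hs.subset (subset_insert a s)), inf_insert, erase_insert ha]
    set x := (insert a s).sup f ⊓ (s.sup f ⊓ s.inf fun i => ((insert a s).erase i).sup f)
    have hx : x ≤ s.sup f := inf_le_right.trans inf_le_left
    refine le_inf hx (Finset.le_inf fun i hi => hcut i hi ▸ le_inf hx ?_)
    exact inf_le_right.trans (inf_le_right.trans (inf_le hi))

end Finset

theorem exists_finset_supIndep_sup_eq {α : Type*} [Lattice α] [OrderBot α] [IsModularLattice α]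
    [WellFoundedLT α] (p : α → Prop)
    (h : ∀ a ≠ ⊥, ∃ b c, p b ∧ b ≠ ⊥ ∧ Disjoint b c ∧ b ⊔ c = a) (a : α) :
    ∃ s : Finset α, s.SupIndep id ∧ s.sup id = a ∧ ∀ b ∈ s, p b := by
  classical
  induction a using WellFoundedLT.induction with
  | _ a ih =>
    by_cases ha : a = ⊥
    · exact ⟨∅, Finset.supIndep_empty _, by simp [ha], by simp⟩
    obtain ⟨b, c, hb, hb₀, hbc, rfl⟩ := h a ha
    have hc : c < b ⊔ c := lt_of_le_of_ne le_sup_right fun hc =>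
      hb₀ (hbc.eq_bot_of_le (hc ▸ le_sup_left))
    obtain ⟨s, hs, rfl, hps⟩ := ih c hc
    exact ⟨insert b s, hs.insert hbc, Finset.sup_insert, by simpa using ⟨hb, hps⟩⟩

theorem exists_maximal_disjoint {α : Type*} [CompleteLattice α] [IsCompactlyGenerated α] (a : α) :
    ∃ b, Maximal (Disjoint a) b :=
  zorn_le₀ _ fun c hcs hc =>
    ⟨sSup c, hc.directedOn.disjoint_sSup_right.2 fun _ hb => hcs hb, fun _ => le_sSup⟩

theorem Submodule.exists_pow_smul_notMem_and_pow_succ_smul_mem {R M : Type*} [Semiring R]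
    [AddCommMonoid M] [Module R M] (P : Submodule R M) (r : R) {x : M} (hx : x ∉ P) {N : ℕ}
    (hN : r ^ N • x ∈ P) : ∃ m, r ^ m • x ∉ P ∧ r ^ (m + 1) • x ∈ P := by
  induction N with
  | zero => exact absurd (by simpa using hN) hx
  | succ N ih =>
    by_cases h : r ^ N • x ∈ P
    · exact ih h
    · exact ⟨N, h, hN⟩

theorem isIndecModule_of_infIrred_bot {R M : Type} [Ring R] [AddCommGroup M] [Module R M]
    (h : InfIrred (⊥ : Submodule R M)) : IsIndecModule R M := by
  refine ⟨?_, fun K K' hKK' => h.2 hKK'.inf_eq_bot⟩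
  rw [← Submodule.nontrivial_iff R, nontrivial_iff]
  exact ⟨⊥, ⊤, fun hbt => h.1 (hbt ▸ isMax_top)⟩

section ShortExact

variable {R M E N X : Type*} [Ring R] [AddCommGroup M] [Module R M] [AddCommGroup E] [Module R E]
  [AddCommGroup N] [Module R N] [AddCommGroup X] [Module R X]
  {f : M →ₗ[R] E} {g : E →ₗ[R] N}

theorem LinearMap.exists_section_of_bijective_comp (i : X →ₗ[R] E) (h : Bijective (g ∘ₗ i)) :
    ∃ s : N →ₗ[R] E, g ∘ₗ s = LinearMap.id :=
  ⟨i ∘ₗ (LinearEquiv.ofBijective _ h).symm.toLinearMap,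
    LinearMap.ext (LinearEquiv.ofBijective _ h).apply_symm_apply⟩

theorem Function.Exact.exists_section_of_bijective_comp (hfg : Exact f g) (hg : Surjective g)
    (p : E →ₗ[R] X) (hp : Bijective (p ∘ₗ f)) : ∃ s : N →ₗ[R] E, g ∘ₗ s = LinearMap.id := by
  let e := LinearEquiv.ofBijective _ hp
  have hsplit := hfg.split_tfae'.out 1 0
  exact (hsplit.1 ⟨hg, e.symm.toLinearMap ∘ₗ p, LinearMap.ext e.symm_apply_apply⟩).2

theorem Module.length_add_one_le_of_injective (f : M →ₗ[R] E) (hf : Function.Injective f)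
    (hf' : ¬Surjective f) : Module.length R M + 1 ≤ Module.length R E := by
  rw [Module.length_eq_add_of_exact f (LinearMap.range f).mkQ hf (Submodule.mkQ_surjective _)
    (LinearMap.exact_map_mkQ_range f)]
  have : Nontrivial (E ⧸ LinearMap.range f) := by
    rwa [Submodule.Quotient.nontrivial_iff, ne_eq, LinearMap.range_eq_top]
  gcongr
  exact Order.one_le_iff_pos.2 Module.length_pos

theorem Module.length_add_one_le_of_surjective (g : E →ₗ[R] N) (hg : Surjective g)
    (hg' : ¬Function.Injective g) : Module.length R N + 1 ≤ Module.length R E := by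
  rw [Module.length_eq_add_of_exact _ g (LinearMap.ker g).injective_subtype hg
    (LinearMap.exact_subtype_ker_map g), add_comm]
  have : Nontrivial (LinearMap.ker g) := by
    rwa [Submodule.nontrivial_iff_ne_bot, ne_eq, LinearMap.ker_eq_bot]
  gcongr
  exact Order.one_le_iff_pos.2 Module.length_pos

theorem Submodule.length_add_length_le_of_disjoint {U U' : Submodule R E} (h : Disjoint U U') :
    Module.length R U + Module.length R U' ≤ Module.length R E := by
  rw [← Module.length_prod]
  refine Module.length_le_of_injective (U.subtype.coprod U'.subtype) ?_
  rw [← LinearMap.ker_eq_bot, LinearMap.ker_coprod_of_disjoint_range _ _ (by simpa using h)]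
  simp

theorem Function.Exact.not_disjoint_of_not_split [IsArtinian R E] [IsNoetherian R E]
    (hfg : Exact f g) (hf : Injective f) (hg : Surjective g)
    (hns : ¬∃ s : N →ₗ[R] E, g ∘ₗ s = LinearMap.id) {U U' : Submodule R E} (p : E →ₗ[R] U)
    (hp : Injective (p ∘ₗ f)) (hU' : Surjective (g ∘ₗ U'.subtype)) : ¬Disjoint U U' := by
  intro hUU'
  have hMU := Module.length_add_one_le_of_injective _ hp fun hp' =>
    hns (hfg.exists_section_of_bijective_comp hg p ⟨hp, hp'⟩)
  have hNU' := Module.length_add_one_le_of_surjective _ hU' fun h =>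
    hns (LinearMap.exists_section_of_bijective_comp U'.subtype ⟨h, hU'⟩)
  have hE := Module.length_eq_add_of_exact f g hf hg hfg
  have hfin : Module.length R E ≠ ⊤ := Module.length_ne_top
  rw [hE] at hfin
  refine (ENat.add_one_le_iff hfin).1 ?_ |>.ne rfl
  calc Module.length R M + Module.length R N + 1
      ≤ Module.length R M + 1 + (Module.length R N + 1) := by
        rw [add_add_add_comm]; gcongr; exact le_add_self
    _ ≤ Module.length R U + Module.length R U' := add_le_add hMU hNU'
    _ ≤ _ := hE ▸ Submodule.length_add_length_le_of_disjoint hUU'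

theorem Function.Exact.exists_summand_of_not_split [IsArtinian R E] [IsNoetherian R E]
    (S : Finset (Submodule R E)) (hS : S.SupIndep id) (htop : S.sup id = ⊤)
    (hM : InfIrred (⊥ : Submodule R M)) (hN : SupIrred (⊤ : Submodule R N))
    (hfg : Exact f g) (hf : Injective f) (hg : Surjective g)
    (hns : ¬∃ s : N →ₗ[R] E, g ∘ₗ s = LinearMap.id) :
    ∃ U ∈ S, ∃ h : IsCompl U ((S.erase U).sup id),
      Injective (U.projectionOnto _ h ∘ₗ f) ∧ Surjective (g ∘ₗ U.subtype) := by
  classical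
  have hW : ∀ U ∈ S, IsCompl U ((S.erase U).sup id) := fun U hU => hS.isCompl_sup_erase htop hU
  obtain ⟨U, hU, hUf⟩ : ∃ U ∈ S, ((S.erase U).sup id).comap f = ⊥ := by
    have h₀ := hS.sup_inf_inf_sup_erase_eq_bot
    rw [htop, top_inf_eq] at h₀
    refine hM.finset_inf_eq ((Finset.apply_inf_eq_inf_comp (Submodule.comap f)
      (fun _ _ => Submodule.comap_inf _ _ _) (Submodule.comap_top f)).symm.trans ?_)
    rw [h₀, Submodule.comap_bot, LinearMap.ker_eq_bot.2 hf]
  obtain ⟨U', hU', hU'g⟩ : ∃ U' ∈ S, U'.map g = ⊤ := by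
    refine hN.finset_sup_eq ((Finset.apply_sup_eq_sup_comp (f := id) (Submodule.map g)
      (fun _ _ => Submodule.map_sup _ _ _) (Submodule.map_bot g)).symm.trans ?_)
    rw [htop, Submodule.map_top, LinearMap.range_eq_top.2 hg]
  have hinj : Injective (U.projectionOnto _ (hW U hU) ∘ₗ f) := by
    rw [← LinearMap.ker_eq_bot, LinearMap.ker_comp, Submodule.ker_projectionOnto, hUf]
  have hsurj : Surjective (g ∘ₗ U'.subtype) := by
    rw [← LinearMap.range_eq_top, LinearMap.range_comp, Submodule.range_subtype, hU'g]
  obtain rfl : U = U' := by_contra fun hne =>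
    hfg.not_disjoint_of_not_split hf hg hns _ hinj hsurj (hS.pairwiseDisjoint hU hU' hne)
  exact ⟨U, hU, hW U hU, hinj, hsurj⟩

end ShortExact

namespace CnAlg

open Fin.NatCast Fin.CommRing Submodule

variable {k : Type} [Field k] {n : ℕ}

variable (k n) in
noncomputable def arrow (i : Fin n) : CnAlg k n :=
  RingQuot.mkAlgHom k (CnRel k n) (FreeAlgebra.ι k (Sum.inr i))

variable (k n) in
noncomputable def arrowSum : CnAlg k n := ∑ i, arrow k n i

theorem subsingleton_zero : Subsingleton (CnAlg k 0) :=
  subsingleton_of_zero_eq_one <| by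
    simpa using RingQuot.mkAlgHom_rel k (CnRel.unit (k := k) (n := 0))

theorem finShift_eq_add [NeZero n] (i : Fin n) (t : ℕ) : finShift i t = i + t := by
  ext
  simp [finShift, Fin.val_add, Fin.val_natCast, Nat.add_mod]

theorem cnIdem_mul_self (i : Fin n) : cnIdem k n i * cnIdem k n i = cnIdem k n i := by
  rw [cnIdem, ← map_mul]
  exact RingQuot.mkAlgHom_rel k (CnRel.idem i)

theorem cnIdem_mul_cnIdem_of_ne {i j : Fin n} (h : i ≠ j) : cnIdem k n i * cnIdem k n j = 0 := by
  rw [cnIdem, cnIdem, ← map_mul, RingQuot.mkAlgHom_rel k (CnRel.orth i j h), map_zero]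

theorem sum_cnIdem : ∑ i, cnIdem k n i = 1 := by
  simpa [cnIdem, map_sum] using RingQuot.mkAlgHom_rel k (CnRel.unit (k := k) (n := n))

theorem cnIdem_sub_one_mul_arrow [NeZero n] (i : Fin n) :
    cnIdem k n (i - 1) * arrow k n i = arrow k n i := by
  have h : finShift i (n - 1) = i - 1 := by
    rw [finShift_eq_add, Nat.cast_pred (NeZero.pos n), Fin.natCast_self, zero_sub, sub_eq_add_neg]
  rw [← h, cnIdem, arrow, ← map_mul]
  exact RingQuot.mkAlgHom_rel k (CnRel.arrow_tgt i)

theorem arrow_mul_cnIdem (i : Fin n) : arrow k n i * cnIdem k n i = arrow k n i := by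
  rw [cnIdem, arrow, ← map_mul]
  exact RingQuot.mkAlgHom_rel k (CnRel.arrow_src i)

theorem arrowSum_mul_cnIdem (i : Fin n) : arrowSum k n * cnIdem k n i = arrow k n i := by
  rw [arrowSum, Finset.sum_mul, Finset.sum_eq_single i (fun j _ hj => ?_) (by simp),
    arrow_mul_cnIdem]
  rw [← arrow_mul_cnIdem j, mul_assoc, cnIdem_mul_cnIdem_of_ne hj, mul_zero]

theorem arrowSum_pow_mul_cnIdem [NeZero n] (m : ℕ) (i : Fin n) :
    arrowSum k n ^ m * cnIdem k n i =
      ((List.range m).map fun t => arrow k n (i - m + (t + 1 : ℕ))).prod * cnIdem k n i := by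
  induction m generalizing i with
  | zero => simp
  | succ m ih =>
    rw [pow_succ, mul_assoc, arrowSum_mul_cnIdem, ← cnIdem_sub_one_mul_arrow, ← mul_assoc, ih,
      mul_assoc, cnIdem_sub_one_mul_arrow, List.range_succ, List.map_append, List.prod_append,
      mul_assoc, List.map_singleton, List.prod_singleton, sub_add_cancel, arrow_mul_cnIdem]
    congr 3 with t
    congr 1
    push_cast
    ring

theorem arrowSum_pow_eq_zero [NeZero n] : arrowSum k n ^ n = 0 := by
  rw [← mul_one (arrowSum k n ^ n), ← sum_cnIdem, Finset.mul_sum]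
  refine Finset.sum_eq_zero fun i _ => ?_
  have hcycle := RingQuot.mkAlgHom_rel k (CnRel.cycle (k := k) i)
  rw [map_zero, cnCycle, map_list_prod, List.map_map] at hcycle
  rw [arrowSum_pow_mul_cnIdem, Fin.natCast_self, sub_zero, ← zero_mul (cnIdem k n i), ← hcycle]
  congr 3
  funext t
  simp [arrow, finShift_eq_add]


section Homogeneous

variable {M : Type*} [AddCommGroup M] [Module (CnAlg k n) M]

variable (k) in
def IsHomog (d : Fin n) (x : M) : Prop := cnIdem k n d • x = x

variable (k n) in
theorem sum_cnIdem_smul (x : M) : ∑ i, cnIdem k n i • x = x := by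
  rw [← Finset.sum_smul, sum_cnIdem, one_smul]

theorem isHomog_cnIdem_smul (i : Fin n) (x : M) : IsHomog k i (cnIdem k n i • x) := by
  rw [IsHomog, ← mul_smul, cnIdem_mul_self]

namespace IsHomog

variable {d : Fin n} {x : M}

theorem cnIdem_smul_of_ne (hx : IsHomog k d x) {c : Fin n} (hc : c ≠ d) :
    cnIdem k n c • x = 0 := by
  rw [← hx, ← mul_smul, cnIdem_mul_cnIdem_of_ne hc, zero_smul]

theorem arrow_smul_of_ne (hx : IsHomog k d x) {i : Fin n} (hi : i ≠ d) : arrow k n i • x = 0 := by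
  rw [← hx, ← mul_smul, ← arrow_mul_cnIdem i, mul_assoc, cnIdem_mul_cnIdem_of_ne hi, mul_zero,
    zero_smul]

theorem arrowSum_smul_eq (hx : IsHomog k d x) : arrowSum k n • x = arrow k n d • x := by
  rw [← hx, ← mul_smul, ← mul_smul, arrowSum_mul_cnIdem, arrow_mul_cnIdem]

variable [NeZero n]

theorem arrowSum_smul (hx : IsHomog k d x) : IsHomog k (d - 1) (arrowSum k n • x) := by
  rw [IsHomog, hx.arrowSum_smul_eq, ← mul_smul, cnIdem_sub_one_mul_arrow]

theorem arrowSum_pow_smul (hx : IsHomog k d x) (m : ℕ) :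
    IsHomog k (d - m : Fin n) (arrowSum k n ^ m • x) := by
  induction m with
  | zero => simpa using hx
  | succ m ih =>
    rw [pow_succ', mul_smul, Nat.cast_succ, sub_add_eq_sub_sub]
    exact ih.arrowSum_smul

end IsHomog

variable [NeZero n]

theorem exists_isHomog_notMem_arrowSum_smul_mem {P : Submodule (CnAlg k n) M} (hP : P ≠ ⊤) :
    ∃ (d : Fin n) (u : M), IsHomog k d u ∧ u ∉ P ∧ arrowSum k n • u ∈ P := by
  obtain ⟨x, hx⟩ : ∃ x, x ∉ P := by
    by_contra! h
    exact hP (eq_top_iff.2 fun x _ => h x)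
  obtain ⟨i, hi⟩ : ∃ i, cnIdem k n i • x ∉ P := by
    by_contra! h
    exact hx (sum_cnIdem_smul k n x ▸ P.sum_mem fun i _ => h i)
  obtain ⟨m, hm, hm₁⟩ := P.exists_pow_smul_notMem_and_pow_succ_smul_mem (arrowSum k n) hi
    (N := n) (by simp [arrowSum_pow_eq_zero])
  refine ⟨_, _, (isHomog_cnIdem_smul i x).arrowSum_pow_smul m, hm, ?_⟩
  rwa [← mul_smul, ← pow_succ']

variable [Module k M]

variable (k n) in
noncomputable def powSpan (x : M) : Submodule k M :=
  span k (Set.range fun j : Fin n => arrowSum k n ^ (j : ℕ) • x)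

theorem pow_smul_mem_powSpan (x : M) (j : ℕ) : arrowSum k n ^ j • x ∈ powSpan k n x := by
  rcases lt_or_ge j n with hj | hj
  · exact subset_span ⟨⟨j, hj⟩, rfl⟩
  · rw [pow_eq_zero_of_le hj arrowSum_pow_eq_zero, zero_smul]
    exact zero_mem _

variable [IsScalarTower k (CnAlg k n) M]

namespace IsHomog

variable {d : Fin n} {x : M}

theorem smul_mem_powSpan (hx : IsHomog k d x) (r : CnAlg k n) {z : M}
    (hz : z ∈ powSpan k n x) : r • z ∈ powSpan k n x := by
  have hgen : ∀ r : CnAlg k n, (∀ j : ℕ, r • arrowSum k n ^ j • x ∈ powSpan k n x) →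
      ∀ z ∈ powSpan k n x, r • z ∈ powSpan k n x := by
    intro r hr z hz
    induction hz using span_induction with
    | mem z hz => obtain ⟨j, rfl⟩ := hz; exact hr j
    | zero => simp
    | add z z' _ _ h h' => rw [smul_add]; exact add_mem h h'
    | smul t z _ h => rw [smul_comm]; exact smul_mem _ t h
  obtain ⟨w, rfl⟩ := RingQuot.mkAlgHom_surjective k (CnRel k n) r
  induction w using FreeAlgebra.induction generalizing z with
  | grade0 t =>
    rw [AlgHom.commutes, algebraMap_smul]
    exact smul_mem _ t hz
  | grade1 i =>
    refine hgen _ (fun j => ?_) z hz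
    have hj := hx.arrowSum_pow_smul j
    rcases i with i | i
    · change cnIdem k n i • _ ∈ _
      obtain rfl | hi := eq_or_ne i (d - j)
      · rw [hj]
        exact pow_smul_mem_powSpan x j
      · rw [hj.cnIdem_smul_of_ne hi]
        exact zero_mem _
    · change arrow k n i • _ ∈ _
      obtain rfl | hi := eq_or_ne i (d - j)
      · rw [← hj.arrowSum_smul_eq, ← mul_smul, ← pow_succ']
        exact pow_smul_mem_powSpan x _
      · rw [hj.arrow_smul_of_ne hi]
        exact zero_mem _
  | mul w w' h h' =>
    rw [map_mul, mul_smul]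
    exact h (h' hz)
  | add w w' h h' =>
    rw [map_add, add_smul]
    exact add_mem (h hz) (h' hz)

theorem mem_powSpan (hx : IsHomog k d x) {y : M} (hy : y ∈ span (CnAlg k n) {x}) :
    y ∈ powSpan k n x := by
  obtain ⟨r, rfl⟩ := mem_span_singleton.1 hy
  exact hx.smul_mem_powSpan r (by simpa using pow_smul_mem_powSpan x 0)

theorem exists_eq_smul (hx : IsHomog k d x) {c : Fin n} {y : M} (hy : IsHomog k c y)
    (hyx : y ∈ span (CnAlg k n) {x}) :
    ∃ t : k, y = t • arrowSum k n ^ ((d - c : Fin n) : ℕ) • x := by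
  suffices h : ∀ z ∈ powSpan k n x,
      cnIdem k n c • z ∈ span k {arrowSum k n ^ ((d - c : Fin n) : ℕ) • x} by
    obtain ⟨t, ht⟩ := mem_span_singleton.1 (hy ▸ h y (hx.mem_powSpan hyx))
    exact ⟨t, ht.symm⟩
  intro z hz
  induction hz using span_induction with
  | mem z hz =>
    obtain ⟨j, rfl⟩ := hz
    have hj := hx.arrowSum_pow_smul j
    rw [Fin.cast_val_eq_self] at hj
    obtain rfl | hc := eq_or_ne c (d - j)
    · rw [hj, sub_sub_cancel]
      exact mem_span_singleton_self _
    · rw [hj.cnIdem_smul_of_ne hc]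
      exact zero_mem _
  | zero => simp
  | add z z' _ _ h h' => rw [smul_add]; exact add_mem h h'
  | smul t z _ h => rw [smul_comm]; exact smul_mem _ t h

theorem exists_sub_smul_mem (hx : IsHomog k d x) {y : M} (hy : y ∈ span (CnAlg k n) {x}) :
    ∃ t : k, y - t • x ∈ span (CnAlg k n) {arrowSum k n • x} := by
  have hle : powSpan k n x ≤
      span k {x} ⊔ (span (CnAlg k n) {arrowSum k n • x}).restrictScalars k := by
    rw [powSpan, span_le]
    rintro _ ⟨⟨_ | j, _⟩, rfl⟩
    · simpa using mem_sup_left (mem_span_singleton_self x)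
    · refine mem_sup_right (?_ : arrowSum k n ^ (j + 1) • x ∈ _)
      rw [pow_succ, mul_smul]
      exact smul_mem _ _ (mem_span_singleton_self _)
  obtain ⟨y₁, hy₁, y₂, hy₂, rfl⟩ := mem_sup.1 (hle (hx.mem_powSpan hy))
  obtain ⟨t, rfl⟩ := mem_span_singleton.1 hy₁
  exact ⟨t, by simpa using hy₂⟩

theorem pow_smul_mem_of_ne_bot (hx : IsHomog k d x) {m : ℕ}
    (hm₁ : arrowSum k n ^ (m + 1) • x = 0) {K : Submodule (CnAlg k n) M}
    (hK : K ≤ span (CnAlg k n) {x}) (hK₀ : K ≠ ⊥) : arrowSum k n ^ m • x ∈ K := by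
  obtain ⟨y, hyK, hy₀⟩ := exists_mem_ne_zero_of_ne_bot hK₀
  obtain ⟨c, hc⟩ : ∃ c, cnIdem k n c • y ≠ 0 := by
    by_contra! h
    exact hy₀ (by rw [← sum_cnIdem_smul k n y]; exact Finset.sum_eq_zero fun c _ => h c)
  obtain ⟨t, ht⟩ := hx.exists_eq_smul (isHomog_cnIdem_smul c y) (hK (K.smul_mem _ hyK))
  set j := ((d - c : Fin n) : ℕ)
  have ht₀ : t ≠ 0 := by
    rintro rfl
    exact hc (by rw [ht, zero_smul])
  have hjK : arrowSum k n ^ j • x ∈ K := by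
    have := K.smul_of_tower_mem t⁻¹ (K.smul_mem (cnIdem k n c) hyK)
    rwa [ht, inv_smul_smul₀ ht₀] at this
  have hjm : j ≤ m := by
    by_contra! hlt
    apply hc
    rw [ht, ← Nat.sub_add_cancel (Nat.succ_le_of_lt hlt), pow_add, mul_smul, hm₁, smul_zero,
      smul_zero]
  rw [← Nat.sub_add_cancel hjm, pow_add, mul_smul]
  exact K.smul_mem _ hjK

theorem infIrred_bot (hx : IsHomog k d x) (hx₀ : x ≠ 0) (htop : span (CnAlg k n) {x} = ⊤) :
    InfIrred (⊥ : Submodule (CnAlg k n) M) := by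
  obtain ⟨m, hm, hm₁⟩ := (⊥ : Submodule (CnAlg k n) M).exists_pow_smul_notMem_and_pow_succ_smul_mem
    (arrowSum k n) (by simpa using hx₀) (N := n) (by simp [arrowSum_pow_eq_zero])
  rw [mem_bot] at hm hm₁
  have hsocle : ∀ K : Submodule (CnAlg k n) M, K ≠ ⊥ → arrowSum k n ^ m • x ∈ K :=
    fun K hK => hx.pow_smul_mem_of_ne_bot hm₁ (htop ▸ le_top) hK
  refine ⟨fun hmax => hx₀ (span_singleton_eq_bot.1 (le_bot_iff.1 (hmax bot_le))),
    fun K K' hKK' => ?_⟩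
  by_contra! h
  exact hm ((mem_bot _).1 (hKK' ▸ mem_inf.2 ⟨hsocle K h.1, hsocle K' h.2⟩))

theorem cnIdem_smul_eq_zero_of_notMem (hx : IsHomog k d x) {K : Submodule (CnAlg k n) M}
    (hK : K ≤ span (CnAlg k n) {x}) (hxK : x ∉ K) {y : M} (hy : y ∈ K) :
    cnIdem k n d • y = 0 := by
  obtain ⟨t, ht⟩ := hx.exists_eq_smul (isHomog_cnIdem_smul d y) (hK (K.smul_mem _ hy))
  rw [sub_self, Fin.val_zero, pow_zero, one_smul] at ht
  obtain rfl | ht₀ := eq_or_ne t 0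
  · rwa [zero_smul] at ht
  · refine absurd ?_ hxK
    have := K.smul_of_tower_mem t⁻¹ (K.smul_mem (cnIdem k n d) hy)
    rwa [ht, inv_smul_smul₀ ht₀] at this

theorem supIrred_top (hx : IsHomog k d x) (hx₀ : x ≠ 0) (htop : span (CnAlg k n) {x} = ⊤) :
    SupIrred (⊤ : Submodule (CnAlg k n) M) := by
  have htop_iff : ∀ K : Submodule (CnAlg k n) M, K = ⊤ ↔ x ∈ K := fun K =>
    ⟨fun h => h ▸ mem_top, fun h => top_le_iff.1 (htop ▸ (span_singleton_le_iff_mem _ _).2 h)⟩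
  refine ⟨fun hmin => hx₀ ((mem_bot _).1 ((htop_iff ⊥).1 (le_antisymm (hmin bot_le) bot_le).symm)),
    fun K K' hKK' => ?_⟩
  simp only [htop_iff] at hKK' ⊢
  by_contra! h
  obtain ⟨y, hy, y', hy', hyy'⟩ := mem_sup.1 hKK'
  apply hx₀
  rw [← hx, ← hyy', smul_add, hx.cnIdem_smul_eq_zero_of_notMem (htop ▸ le_top) h.1 hy,
    hx.cnIdem_smul_eq_zero_of_notMem (htop ▸ le_top) h.2 hy', add_zero]

theorem disjoint_sup_span_singleton (hx : IsHomog k d x) {V W : Submodule (CnAlg k n) M}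
    (hVW : Disjoint V W) (hx₁ : x ∉ V ⊔ W) (hx₂ : arrowSum k n • x ∈ W) :
    Disjoint V (W ⊔ span (CnAlg k n) {x}) := by
  rw [disjoint_def]
  intro y hyV hy
  obtain ⟨w, hw, z, hz, rfl⟩ := mem_sup.1 hy
  obtain ⟨t, ht⟩ := hx.exists_sub_smul_mem hz
  have hz' : z - t • x ∈ W := span_le.2 (by simpa using hx₂) ht
  obtain rfl | ht₀ := eq_or_ne t 0
  · exact disjoint_def.1 hVW _ hyV (by simpa using W.add_mem hw hz')
  · refine absurd ?_ hx₁
    have htx : t • x ∈ V ⊔ W := by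
      rw [show t • x = w + z - (w + (z - t • x)) by abel]
      exact sub_mem (mem_sup_left hyV) (mem_sup_right (W.add_mem hw hz'))
    simpa [inv_smul_smul₀ ht₀] using smul_of_tower_mem _ t⁻¹ htx

theorem exists_isHomog_notMem_sup_arrowSum_smul_mem {m : ℕ}
    (hl : ∀ y : M, arrowSum k n ^ (m + 1) • y = 0) (hx : IsHomog k d x)
    (hxm : arrowSum k n ^ m • x ≠ 0) {W : Submodule (CnAlg k n) M}
    (hW : Disjoint (span (CnAlg k n) {x}) W) {s : Fin n} {u : M} (hu : IsHomog k s u)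
    (hu₁ : u ∉ span (CnAlg k n) {x} ⊔ W) (hu₂ : arrowSum k n • u ∈ span (CnAlg k n) {x} ⊔ W) :
    ∃ u', IsHomog k s u' ∧ u' ∉ span (CnAlg k n) {x} ⊔ W ∧ arrowSum k n • u' ∈ W := by
  obtain ⟨z, hz, w, hw, hzw⟩ := mem_sup.1 hu₂
  obtain ⟨t, ht⟩ := hx.exists_eq_smul (isHomog_cnIdem_smul (s - 1) z) (smul_mem _ _ hz)
  set j := ((d - (s - 1) : Fin n) : ℕ) with hj
  have hw' : cnIdem k n (s - 1) • w ∈ W := W.smul_mem _ hw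
  have hkey : arrowSum k n • u = t • arrowSum k n ^ j • x + cnIdem k n (s - 1) • w := by
    rw [← hu.arrowSum_smul, ← hzw, smul_add, ← ht]
  have htx : ∀ i : ℕ, t • arrowSum k n ^ i • x ∈ span (CnAlg k n) {x} := fun i =>
    smul_of_tower_mem _ t (smul_mem _ _ (mem_span_singleton_self x))
  obtain hj₀ | hj₀ := Nat.eq_zero_or_pos j
  · -- the socle `a ^ m • x` of `span {x}` would lie in `W`
    refine ⟨u, hu, hu₁, ?_⟩
    obtain rfl : t = 0 := by
      by_contra ht₀
      have h₀ : arrowSum k n ^ m • (arrowSum k n • u) = 0 := by rw [← mul_smul, ← pow_succ, hl]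
      rw [hkey, smul_add, hj₀, pow_zero, one_smul, smul_comm, add_eq_zero_iff_eq_neg] at h₀
      refine hxm ((smul_eq_zero.1 (disjoint_def.1 hW _ (htx m) ?_)).resolve_left ht₀)
      exact h₀ ▸ W.neg_mem (W.smul_mem _ hw')
    rw [hkey, zero_smul, zero_add]
    exact hw'
  · obtain ⟨i, hi⟩ := Nat.exists_eq_add_one.2 hj₀
    have hdi : d - (i : Fin n) = s := by
      have h := Fin.cast_val_eq_self (d - (s - 1))
      rw [← hj, hi, Nat.cast_succ] at h
      linear_combination -h
    refine ⟨u - t • arrowSum k n ^ i • x, ?_, fun h => hu₁ ?_, ?_⟩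
    · have hxi := hx.arrowSum_pow_smul i
      rw [hdi] at hxi
      rw [IsHomog, smul_sub, hu, smul_comm, hxi]
    · simpa using add_mem h (mem_sup_left (htx i))
    · rw [smul_sub, hkey, smul_comm (arrowSum k n) t, ← mul_smul, ← pow_succ', ← hi,
        add_sub_cancel_left]
      exact hw'

end IsHomog

theorem IsHomog.exists_isCompl {m : ℕ} (hl : ∀ y : M, arrowSum k n ^ (m + 1) • y = 0) {d : Fin n}
    {x : M} (hx : IsHomog k d x) (hxm : arrowSum k n ^ m • x ≠ 0) :
    ∃ W, IsCompl (span (CnAlg k n) {x}) W := by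
  obtain ⟨W, hW⟩ := exists_maximal_disjoint (span (CnAlg k n) {x})
  refine ⟨W, hW.prop, codisjoint_iff.2 (by_contra fun hne => ?_)⟩
  obtain ⟨s, u, hu, hu₁, hu₂⟩ := exists_isHomog_notMem_arrowSum_smul_mem (k := k) hne
  obtain ⟨u', hu', hu'₁, hu'₂⟩ :=
    hx.exists_isHomog_notMem_sup_arrowSum_smul_mem hl hxm hW.prop hu hu₁ hu₂
  have hle := hW.2 (hu'.disjoint_sup_span_singleton hW.prop hu'₁ hu'₂) le_sup_left
  exact hu'₁ (mem_sup_right (hle (mem_sup_right (mem_span_singleton_self u'))))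

theorem exists_isHomog_isCompl_span [Nontrivial M] :
    ∃ (d : Fin n) (x : M), IsHomog k d x ∧ x ≠ 0 ∧ ∃ W, IsCompl (span (CnAlg k n) {x}) W := by
  have hid : (id : M → M) ∉ (⊥ : Submodule (CnAlg k n) (M → M)) := by
    rw [mem_bot]
    obtain ⟨y, hy⟩ := exists_ne (0 : M)
    exact fun h => hy (congrFun h y)
  -- the Loewy length of `M`, read off from `id` in the module `M → M`
  obtain ⟨m, hm, hm₁⟩ := exists_pow_smul_notMem_and_pow_succ_smul_mem _ (arrowSum k n) hid
    (N := n) (by simp [arrowSum_pow_eq_zero])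
  rw [mem_bot] at hm hm₁
  have hl : ∀ y : M, arrowSum k n ^ (m + 1) • y = 0 := fun y => by simpa using congrFun hm₁ y
  obtain ⟨x, hx⟩ : ∃ x : M, arrowSum k n ^ m • x ≠ 0 := by
    by_contra! h
    exact hm (funext fun y => by simpa using h y)
  obtain ⟨i, hi⟩ : ∃ i, arrowSum k n ^ m • cnIdem k n i • x ≠ 0 := by
    by_contra! h
    rw [← sum_cnIdem_smul k n x, Finset.smul_sum] at hx
    exact hx (Finset.sum_eq_zero fun i _ => h i)
  exact ⟨i, _, isHomog_cnIdem_smul i x, fun h => hi (by rw [h, smul_zero]),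
    (isHomog_cnIdem_smul i x).exists_isCompl hl hi⟩

theorem exists_isHomog_disjoint_sup_eq {P : Submodule (CnAlg k n) M} (hP : P ≠ ⊥) :
    ∃ (d : Fin n) (x : M) (W : Submodule (CnAlg k n) M), IsHomog k d x ∧ x ≠ 0 ∧
      Disjoint (span (CnAlg k n) {x}) W ∧ span (CnAlg k n) {x} ⊔ W = P := by
  have := nontrivial_iff_ne_bot.2 hP
  obtain ⟨d, x, hx, hx₀, W, hW⟩ := exists_isHomog_isCompl_span (k := k) (n := n) (M := P)
  have hspan : span (CnAlg k n) {(x : M)} = (span (CnAlg k n) {x}).map P.subtype := by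
    rw [map_span, Set.image_singleton, subtype_apply]
  refine ⟨d, x, W.map P.subtype, congrArg Subtype.val hx, by simpa using hx₀, ?_, ?_⟩
  · rw [hspan]
    exact disjoint_map P.injective_subtype hW.disjoint
  · rw [hspan, ← Submodule.map_sup, hW.sup_eq_top, map_subtype_top]

theorem IsHomog.infIrred_bot_span {d : Fin n} {x : M} (hx : IsHomog k d x) (hx₀ : x ≠ 0) :
    InfIrred (⊥ : Submodule (CnAlg k n) (span (CnAlg k n) {x})) := by
  set x' : span (CnAlg k n) {x} := ⟨x, mem_span_singleton_self x⟩
  have htop : span (CnAlg k n) {x'} = ⊤ := by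
    refine map_injective_of_injective (injective_subtype _) ?_
    rw [map_span, Set.image_singleton, map_subtype_top]
    rfl
  have hx' : IsHomog k d x' := Subtype.ext hx
  exact hx'.infIrred_bot (by simpa [x'] using hx₀) htop

end Homogeneous

section FiniteLength

variable [NeZero n]

instance : Module.Finite k (CnAlg k n) := by
  rw [Module.finite_def, fg_def]
  refine ⟨_, Set.finite_range fun p : Fin n × Fin n => arrowSum k n ^ (p.1 : ℕ) • cnIdem k n p.2,
    eq_top_iff.2 fun r _ => ?_⟩
  rw [← mul_one r, ← sum_cnIdem, Finset.mul_sum]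
  refine sum_mem fun i _ => ?_
  have hi : IsHomog k i (cnIdem k n i) := cnIdem_mul_self i
  refine span_mono ?_ (hi.mem_powSpan (mem_span_singleton.2 ⟨r, rfl⟩))
  rintro _ ⟨j, rfl⟩
  exact ⟨(j, i), rfl⟩

instance : IsArtinianRing (CnAlg k n) := IsArtinianRing.of_finite k _

instance : IsNoetherianRing (CnAlg k n) := isNoetherian_of_tower k inferInstance

end FiniteLength

section Indecomposable

variable [NeZero n] {M : Type} [AddCommGroup M] [Module (CnAlg k n) M]

theorem exists_isHomog_span_eq_top [Module k M] [IsScalarTower k (CnAlg k n) M]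
    (h : IsIndecModule (CnAlg k n) M) :
    ∃ (d : Fin n) (x : M), IsHomog k d x ∧ x ≠ 0 ∧ span (CnAlg k n) {x} = ⊤ := by
  have := h.1
  obtain ⟨d, x, hx, hx₀, W, hW⟩ := exists_isHomog_isCompl_span (k := k) (n := n) (M := M)
  refine ⟨d, x, hx, hx₀, ?_⟩
  rcases h.2 _ _ hW with h₀ | h₀
  · exact absurd (span_singleton_eq_bot.1 h₀) hx₀
  · simpa [h₀] using hW.sup_eq_top

theorem infIrred_bot_of_isIndecModule (h : IsIndecModule (CnAlg k n) M) :
    InfIrred (⊥ : Submodule (CnAlg k n) M) := by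
  let _ : Module k M := .compHom M (algebraMap k (CnAlg k n))
  have : IsScalarTower k (CnAlg k n) M := .of_algebraMap_smul fun _ _ => rfl
  obtain ⟨d, x, hx, hx₀, htop⟩ := exists_isHomog_span_eq_top (k := k) h
  exact hx.infIrred_bot hx₀ htop

theorem supIrred_top_of_isIndecModule (h : IsIndecModule (CnAlg k n) M) :
    SupIrred (⊤ : Submodule (CnAlg k n) M) := by
  let _ : Module k M := .compHom M (algebraMap k (CnAlg k n))
  have : IsScalarTower k (CnAlg k n) M := .of_algebraMap_smul fun _ _ => rfl
  obtain ⟨d, x, hx, hx₀, htop⟩ := exists_isHomog_span_eq_top (k := k) h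
  exact hx.supIrred_top hx₀ htop

variable (k n M) in
theorem exists_finset_supIndep_infIrred [Module.Finite (CnAlg k n) M] :
    ∃ S : Finset (Submodule (CnAlg k n) M), S.SupIndep id ∧ S.sup id = ⊤ ∧
      ∀ U ∈ S, InfIrred (⊥ : Submodule (CnAlg k n) U) := by
  let _ : Module k M := .compHom M (algebraMap k (CnAlg k n))
  have : IsScalarTower k (CnAlg k n) M := .of_algebraMap_smul fun _ _ => rfl
  refine exists_finset_supIndep_sup_eq _ (fun P hP => ?_) ⊤
  obtain ⟨d, x, W, hx, hx₀, hxW, hsup⟩ := exists_isHomog_disjoint_sup_eq (k := k) hP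
  exact ⟨_, W, hx.infIrred_bot_span hx₀, (span_singleton_eq_bot.not).2 hx₀, hxW, hsup⟩

end Indecomposable

end CnAlg

theorem cn_nonsplit_ses_summand_general
    (k : Type) [Field k] (n : ℕ)
    (M' E N : Type) [AddCommGroup M'] [Module (CnAlg k n) M'] [AddCommGroup E]
    [Module (CnAlg k n) E] [AddCommGroup N] [Module (CnAlg k n) N]
    [Module.Finite (CnAlg k n) E]
    (hM' : IsIndecModule (CnAlg k n) M') (hN : IsIndecModule (CnAlg k n) N)
    (f : M' →ₗ[CnAlg k n] E) (g : E →ₗ[CnAlg k n] N)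
    (hf : Injective f) (hg : Surjective g) (hex : LinearMap.range f = LinearMap.ker g)
    (hnonsplit : ¬ ∃ s : N →ₗ[CnAlg k n] E, g.comp s = LinearMap.id) :
    ∃ (U W : Submodule (CnAlg k n) E) (h : IsCompl U W),
      IsIndecModule (CnAlg k n) ↥U ∧
      Injective ((U.linearProjOfIsCompl W h).comp f) ∧
      Surjective (g.comp U.subtype) := by
  obtain rfl | hn := eq_or_ne n 0
  · have := CnAlg.subsingleton_zero (k := k)
    exact absurd hM'.1 (not_nontrivial_iff_subsingleton.2 (Module.subsingleton (CnAlg k 0) M'))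
  have : NeZero n := ⟨hn⟩
  obtain ⟨S, hS, htop, hS_irr⟩ := CnAlg.exists_finset_supIndep_infIrred k n E
  obtain ⟨U, hU, h, hinj, hsurj⟩ := (LinearMap.exact_iff.2 hex.symm).exists_summand_of_not_split
    S hS htop (CnAlg.infIrred_bot_of_isIndecModule hM') (CnAlg.supIrred_top_of_isIndecModule hN)
    hf hg hnonsplit
  exact ⟨U, _, h, isIndecModule_of_infIrred_bot (hS_irr U hU), hinj, hsurj⟩

/-- Over `C_n`, let `0 → M' → E → N → 0` be a non-split short
exact sequence with `M'` and `N` indecomposable. Then there is an indecomposable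
direct summand `U` of `E` such that `M'` embeds into `U` (via the `U`-component of
the inclusion) and `U` surjects onto `N` (via the restriction of the projection). -/
theorem cn_nonsplit_ses_summand
    (k : Type) [Field k] (n : ℕ)
    (M' E N : Type) [AddCommGroup M'] [Module (CnAlg k n) M'] [AddCommGroup E]
    [Module (CnAlg k n) E] [AddCommGroup N] [Module (CnAlg k n) N]
    [Module.Finite (CnAlg k n) M'] [Module.Finite (CnAlg k n) E] [Module.Finite (CnAlg k n) N]
    (hM' : IsIndecModule (CnAlg k n) M') (hN : IsIndecModule (CnAlg k n) N)
    (f : M' →ₗ[CnAlg k n] E) (g : E →ₗ[CnAlg k n] N)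
    (hf : Injective f) (hg : Surjective g) (hex : LinearMap.range f = LinearMap.ker g)
    (hnonsplit : ¬ ∃ s : N →ₗ[CnAlg k n] E, g.comp s = LinearMap.id) :
    ∃ (U W : Submodule (CnAlg k n) E) (h : IsCompl U W),
      IsIndecModule (CnAlg k n) ↥U ∧
      Injective ((U.linearProjOfIsCompl W h).comp f) ∧
      Surjective (g.comp U.subtype) :=
  cn_nonsplit_ses_summand_general k n M' E N hM' hN f g hf hg hex hnonsplit
end
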